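/- arXiv:math-ph/9807014 — 2 statements merged into one kernel-verified Lean document; each statement's English description precedes it below -/
import Mathlib

section
/- Let F : ℝ × ℝᵐ × ℝᵐ → (ℝᵐ)* be smooth with ∂Fⱼ/∂vⁱ + ∂Fᵢ/∂vʲ = 0 for all i,j (antisymmetry of velocity derivatives). If (m, ξ) satisfies the Newtonian compatibility condition 2ξ⌟dm_{ij} + m_{ik}∂ᵗⱼξᵏ + m_{jk}∂ᵗᵢξᵏ = 0, then (m, ξ_F) with ξ_Fⁱ = ξⁱ + (m⁻¹)^{ik}F_k also satisfies it. -/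
/-- Phase space `(t, qⁱ, vⁱ)` of time-dependent mechanics on `ℝ × ℝᵈ`. -/
abbrev Phase (d : ℕ) := ℝ × (Fin d → ℝ) × (Fin d → ℝ)

/-- Partial derivative `∂ᵗᵢ` with respect to the velocity `vⁱ`. -/
noncomputable def pvel {d : ℕ} (f : Phase d → ℝ) (x : Phase d) (i : Fin d) : ℝ :=
  fderiv ℝ f x (0, 0, Pi.single i 1)

/-- The derivative `ξ⌟d f = (∂_t + vᵏ∂_{qᵏ} + ξᵏ∂_{vᵏ}) f` along a dynamic equation. -/
noncomputable def dynDeriv {d : ℕ} (ξ : Phase d → Fin d → ℝ) (f : Phase d → ℝ)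
    (x : Phase d) : ℝ :=
  fderiv ℝ f x (1, x.2.2, ξ x)

/-- The Newtonian compatibility condition
`2 ξ⌟dm_{ij} + m_{ik}∂ᵗⱼξᵏ + m_{jk}∂ᵗᵢξᵏ = 0`. -/
def NewtonCompat {d : ℕ} (m : Phase d → Matrix (Fin d) (Fin d) ℝ)
    (ξ : Phase d → Fin d → ℝ) : Prop :=
  ∀ (x : Phase d) (i j : Fin d),
    2 * dynDeriv ξ (fun y => m y i j) x
      + (∑ k, m x i k * pvel (fun y => ξ y k) x j)
      + (∑ k, m x j k * pvel (fun y => ξ y k) x i) = 0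

lemma det_contDiff {d : ℕ} {A : Phase d → Matrix (Fin d) (Fin d) ℝ}
    (h : ∀ i j, ContDiff ℝ (⊤ : ℕ∞) fun x => A x i j) :
    ContDiff ℝ (⊤ : ℕ∞) fun x => (A x).det := by
  have e : (fun x => (A x).det) = fun x =>
      ∑ σ : Equiv.Perm (Fin d), ((Equiv.Perm.sign σ : ℤ) : ℝ) * ∏ i, A x (σ i) i := by
    funext x
    rw [Matrix.det_apply]
    simp [Units.smul_def, zsmul_eq_mul]
  rw [e]
  exact ContDiff.sum fun σ _ => contDiff_const.mul (contDiff_prod fun i _ => h _ _)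

lemma inv_entry_contDiff {d : ℕ} {m : Phase d → Matrix (Fin d) (Fin d) ℝ}
    (hm : ∀ i j, ContDiff ℝ (⊤ : ℕ∞) fun x => m x i j) (hu : ∀ x, IsUnit (m x)) (i j : Fin d) :
    ContDiff ℝ (⊤ : ℕ∞) fun x => (m x)⁻¹ i j := by
  have hdet : ∀ x, (m x).det ≠ 0 := fun x =>
    ((Matrix.isUnit_iff_isUnit_det _).mp (hu x)).ne_zero
  have hadj : ContDiff ℝ (⊤ : ℕ∞) fun x => (m x).adjugate i j := by
    simp only [Matrix.adjugate_apply]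
    apply det_contDiff
    intro a b
    by_cases h : a = j
    · simp only [Matrix.updateRow_apply, h, if_pos rfl]; exact contDiff_const
    · simpa [Matrix.updateRow_apply, h] using hm a b
  have e : (fun x => (m x)⁻¹ i j) = fun x => ((m x).det)⁻¹ * (m x).adjugate i j := by
    funext x
    rw [Matrix.inv_def]
    simp [Ring.inverse_eq_inv']
  rw [e]
  exact ((det_contDiff hm).inv hdet).mul hadj

lemma vec_decomp {d : ℕ} (u : Fin d → ℝ) :
    ((0:ℝ), (0:Fin d → ℝ), u)
      = ∑ k, u k • (((0:ℝ), (0:Fin d → ℝ), (Pi.single k 1 : Fin d → ℝ)) : Phase d) := by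
  rw [Prod.ext_iff]
  constructor
  · simp [Prod.fst_sum]
  rw [Prod.ext_iff]
  constructor
  · simp [Prod.snd_sum, Prod.fst_sum]
  · rw [Prod.snd_sum, Prod.snd_sum]
    funext l
    simp [Finset.sum_apply, Pi.single_apply, mul_comm]

lemma dynDeriv_add {d : ℕ} (ξ u : Phase d → Fin d → ℝ) (f : Phase d → ℝ) (x : Phase d) :
    dynDeriv (fun y => ξ y + u y) f x = dynDeriv ξ f x + ∑ k, u x k * pvel f x k := by
  unfold dynDeriv pvel
  have h1 : ((1:ℝ), x.2.2, ξ x + u x) = ((1:ℝ), x.2.2, ξ x) + ((0:ℝ), (0:Fin d → ℝ), u x) := by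
    simp [Prod.ext_iff]
  rw [h1, map_add, vec_decomp (u x), map_sum]
  congr 1
  refine Finset.sum_congr rfl fun k _ => ?_
  rw [ContinuousLinearMap.map_smul, smul_eq_mul]

lemma pvel_add {d : ℕ} {f g : Phase d → ℝ} {x : Phase d}
    (hf : DifferentiableAt ℝ f x) (hg : DifferentiableAt ℝ g x) (b : Fin d) :
    pvel (fun y => f y + g y) x b = pvel f x b + pvel g x b := by
  unfold pvel
  rw [fderiv_fun_add hf hg]
  simp

/-- adding to a Newtonian system `(m, ξ)` an external force `F` whose
velocity derivatives are antisymmetric, `∂ᵗᵢFⱼ + ∂ᵗⱼFᵢ = 0`, yields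
`ξ_Fⁱ = ξⁱ + (m⁻¹)ⁱᵏF_k` which again satisfies the Newtonian compatibility
condition. -/
theorem newtonian_compat_preserved_by_gyroscopic_force
    (d : ℕ) (m : Phase d → Matrix (Fin d) (Fin d) ℝ)
    (ξ : Phase d → Fin d → ℝ) (F : Phase d → Fin d → ℝ)
    (hmsmooth : ∀ i j, ContDiff ℝ (⊤ : ℕ∞) (fun x => m x i j))
    (hξsmooth : ∀ i, ContDiff ℝ (⊤ : ℕ∞) (fun x => ξ x i))
    (hFsmooth : ∀ i, ContDiff ℝ (⊤ : ℕ∞) (fun x => F x i))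
    (hmsym : ∀ x, (m x).IsSymm)
    (hmunit : ∀ x, IsUnit (m x))
    (hmetricsym : ∀ (x : Phase d) (i j k : Fin d),
      pvel (fun y => m y i j) x k = pvel (fun y => m y i k) x j)
    (hF : ∀ (x : Phase d) (i j : Fin d),
      pvel (fun y => F y j) x i + pvel (fun y => F y i) x j = 0)
    (hcompat : NewtonCompat m ξ) :
    NewtonCompat m (fun x => ξ x + (m x)⁻¹.mulVec (F x)) := by
  intro x i j
  set u : Phase d → Fin d → ℝ := fun y => (m y)⁻¹.mulVec (F y) with hu_def
  have hdet : ∀ y, IsUnit (m y).det := fun y => (Matrix.isUnit_iff_isUnit_det _).mp (hmunit y)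
  have husm : ∀ k, ContDiff ℝ (⊤ : ℕ∞) fun y => u y k := by
    intro k
    have e : (fun y => u y k) = fun y => ∑ l, (m y)⁻¹ k l * F y l := by
      funext y; simp [hu_def, Matrix.mulVec, dotProduct]
    rw [e]
    exact ContDiff.sum fun l _ => (inv_entry_contDiff hmsmooth hmunit k l).mul (hFsmooth l)
  have hmd : ∀ a b, DifferentiableAt ℝ (fun y => m y a b) x :=
    fun a b => ((hmsmooth a b).differentiable (by simp)) x
  have hud : ∀ k, DifferentiableAt ℝ (fun y => u y k) x :=
    fun k => ((husm k).differentiable (by simp)) x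
  have hξd : ∀ k, DifferentiableAt ℝ (fun y => ξ y k) x :=
    fun k => ((hξsmooth k).differentiable (by simp)) x
  -- F a = ∑ k, m a k * u k
  have hFrep : ∀ a, (fun y => F y a) = fun y => ∑ k, m y a k * u y k := by
    intro a; funext y
    have e : ∑ k, m y a k * u y k = (m y).mulVec (u y) a := by
      simp [Matrix.mulVec, dotProduct]
    rw [e, hu_def, Matrix.mulVec_mulVec, Matrix.mul_nonsing_inv _ (hdet y), Matrix.one_mulVec]
  -- Leibniz rule
  have hLeib : ∀ a b, pvel (fun y => F y a) x b
      = ∑ k, (pvel (fun y => m y a k) x b * u x k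
            + m x a k * pvel (fun y => u y k) x b) := by
    intro a b
    rw [hFrep a]
    unfold pvel
    rw [fderiv_fun_sum (fun k _ => ((hmd a k).fun_mul (hud k))), ContinuousLinearMap.sum_apply]
    refine Finset.sum_congr rfl fun k _ => ?_
    rw [fderiv_fun_mul (hmd a k) (hud k)]
    simp only [ContinuousLinearMap.add_apply, ContinuousLinearMap.coe_smul',
      Pi.smul_apply, smul_eq_mul]
    ring
  have hdyn := dynDeriv_add ξ u (fun y => m y i j) x
  have hsplit : ∀ a b, pvel (fun y => ξ y a + u y a) x b
      = pvel (fun y => ξ y a) x b + pvel (fun y => u y a) x b :=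
    fun a b => pvel_add (hξd a) (hud a) b
  -- symmetry facts
  have hmswap : (fun y => m y j i) = (fun y => m y i j) := by
    funext y; exact (hmsym y).apply i j
  have hLi : ∑ k, m x i k * pvel (fun y => u y k) x j
      = pvel (fun y => F y i) x j - ∑ k, pvel (fun y => m y i j) x k * u x k := by
    rw [hLeib i j, Finset.sum_add_distrib]
    have e : ∀ k : Fin d, pvel (fun y => m y i k) x j = pvel (fun y => m y i j) x k :=
      fun k => (hmetricsym x i j k).symm
    simp only [e]
    ring
  have hLj : ∑ k, m x j k * pvel (fun y => u y k) x i
      = pvel (fun y => F y j) x i - ∑ k, pvel (fun y => m y i j) x k * u x k := by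
    rw [hLeib j i, Finset.sum_add_distrib]
    have e : ∀ k : Fin d, pvel (fun y => m y j k) x i = pvel (fun y => m y i j) x k := by
      intro k
      rw [← hmetricsym x j i k, hmswap]
    simp only [e]
    ring
  have hgoal : 2 * dynDeriv (fun y => ξ y + u y) (fun y => m y i j) x
      + (∑ k, m x i k * pvel (fun y => ξ y k + u y k) x j)
      + (∑ k, m x j k * pvel (fun y => ξ y k + u y k) x i) = 0 := by
    simp only [hsplit, mul_add, Finset.sum_add_distrib, hdyn, hLi, hLj]
    have hc := hcompat x i j
    have hf' := hF x i j
    have hcomm : ∑ k, u x k * pvel (fun y => m y i j) x k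
        = ∑ k, pvel (fun y => m y i j) x k * u x k :=
      Finset.sum_congr rfl fun k _ => mul_comm _ _
    nlinarith [hc, hf', hcomm]
  exact hgoal
end

section
/- Let γᵗ = ∂_t + γⁱ∂_{qⁱ} + γᵢ∂_{pᵢ} be any time-dependent vector field on ℝ × ℝᵐ × (ℝᵐ)* with dt⌟γ = 1, and define H_V(t,q,p,q̇,ṗ) = ṗᵢγⁱ(t,q,p) − q̇ⁱγᵢ(t,q,p) on the vertical phase space with conjugate pairs (qⁱ,ṗᵢ), (q̇ⁱ,pᵢ). Then the partial derivatives entering the Hamilton equations of H_V in these pairs are ∂H_V/∂ṗᵢ = γⁱ, ∂H_V/∂q̇ⁱ = −γᵢ, ∂H_V/∂qⁱ = ṗⱼ∂_{qⁱ}γʲ − q̇ʲ∂_{qⁱ}γⱼ, ∂H_V/∂pᵢ = ṗⱼ∂_{pᵢ}γʲ − q̇ʲ∂_{pᵢ}γⱼ, reproducing the connection components (54) of Proposition 5. -/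
/-- Momentum phase space `(t, qⁱ, pᵢ)`. -/
abbrev PPhase (d : ℕ) := ℝ × (Fin d → ℝ) × (Fin d → ℝ)

/-- Vertical momentum phase space with coordinates `(t, qⁱ, pᵢ, q̇ⁱ, ṗᵢ)`. -/
abbrev VPhase (d : ℕ) := PPhase d × (Fin d → ℝ) × (Fin d → ℝ)

/-- Partial derivative `∂/∂qⁱ`. -/
noncomputable def dq {d : ℕ} (f : PPhase d → ℝ) (x : PPhase d) (i : Fin d) : ℝ :=
  fderiv ℝ f x (0, Pi.single i 1, 0)

/-- Partial derivative `∂/∂pᵢ`. -/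
noncomputable def dp {d : ℕ} (f : PPhase d → ℝ) (x : PPhase d) (i : Fin d) : ℝ :=
  fderiv ℝ f x (0, 0, Pi.single i 1)

/-- Proposition 5: any connection `γ = ∂_t + γⁱ∂_{qⁱ} + γᵢ∂_{pᵢ}` on
`V*Q → ℝ` gives rise, via `H_V = ṗᵢγⁱ − q̇ⁱγᵢ`, to a Hamiltonian system on the
vertical phase space whose partial derivatives reproduce the components
`γⁱ, γᵢ, γ̄ⁱ = ṗⱼ∂ⁱγʲ − q̇ʲ∂ⁱγⱼ, γ̄ᵢ = −ṗⱼ∂ᵢγʲ + q̇ʲ∂ᵢγⱼ` of the induced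
Hamiltonian connection. -/
theorem connection_induces_vertical_hamiltonian_connection
    (d : ℕ) (γup γdn : PPhase d → Fin d → ℝ)
    (hγup : ∀ i, ContDiff ℝ (⊤ : ℕ∞) (fun x => γup x i))
    (hγdn : ∀ i, ContDiff ℝ (⊤ : ℕ∞) (fun x => γdn x i)) :
    let HV : VPhase d → ℝ := fun z =>
      (∑ i, z.2.2 i * γup z.1 i) - ∑ i, z.2.1 i * γdn z.1 i
    ∀ (z : VPhase d) (i : Fin d),
      fderiv ℝ HV z (0, 0, Pi.single i 1) = γup z.1 i ∧
      fderiv ℝ HV z (0, Pi.single i 1, 0) = -γdn z.1 i ∧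
      fderiv ℝ HV z ((0, Pi.single i 1, 0), 0) =
        (∑ j, z.2.2 j * dq (fun y => γup y j) z.1 i)
          - ∑ j, z.2.1 j * dq (fun y => γdn y j) z.1 i ∧
      fderiv ℝ HV z ((0, 0, Pi.single i 1), 0) =
        (∑ j, z.2.2 j * dp (fun y => γup y j) z.1 i)
          - ∑ j, z.2.1 j * dp (fun y => γdn y j) z.1 i := by
  intro HV z i
  -- continuous linear projections
  set P2 : VPhase d →L[ℝ] (Fin d → ℝ) :=
    (ContinuousLinearMap.snd ℝ (Fin d → ℝ) (Fin d → ℝ)).comp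
      (ContinuousLinearMap.snd ℝ (PPhase d) ((Fin d → ℝ) × (Fin d → ℝ))) with hP2
  set P1 : VPhase d →L[ℝ] (Fin d → ℝ) :=
    (ContinuousLinearMap.fst ℝ (Fin d → ℝ) (Fin d → ℝ)).comp
      (ContinuousLinearMap.snd ℝ (PPhase d) ((Fin d → ℝ) × (Fin d → ℝ))) with hP1
  have hp2 : ∀ j : Fin d, HasFDerivAt (fun w : VPhase d => w.2.2 j)
      ((ContinuousLinearMap.proj j).comp P2) z :=
    fun j => ((ContinuousLinearMap.proj j).comp P2).hasFDerivAt
  have hp1 : ∀ j : Fin d, HasFDerivAt (fun w : VPhase d => w.2.1 j)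
      ((ContinuousLinearMap.proj j).comp P1) z :=
    fun j => ((ContinuousLinearMap.proj j).comp P1).hasFDerivAt
  have hgu : ∀ j : Fin d, HasFDerivAt (fun w : VPhase d => γup w.1 j)
      ((fderiv ℝ (fun x => γup x j) z.1).comp
        (ContinuousLinearMap.fst ℝ (PPhase d) ((Fin d → ℝ) × (Fin d → ℝ)))) z :=
    fun j => (((hγup j).differentiable (by simp) z.1).hasFDerivAt).comp z hasFDerivAt_fst
  have hgd : ∀ j : Fin d, HasFDerivAt (fun w : VPhase d => γdn w.1 j)
      ((fderiv ℝ (fun x => γdn x j) z.1).comp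
        (ContinuousLinearMap.fst ℝ (PPhase d) ((Fin d → ℝ) × (Fin d → ℝ)))) z :=
    fun j => (((hγdn j).differentiable (by simp) z.1).hasFDerivAt).comp z hasFDerivAt_fst
  have hmain : HasFDerivAt HV
      ((∑ j, (z.2.2 j • ((fderiv ℝ (fun x => γup x j) z.1).comp
          (ContinuousLinearMap.fst ℝ (PPhase d) ((Fin d → ℝ) × (Fin d → ℝ))))
        + γup z.1 j • ((ContinuousLinearMap.proj j).comp P2)))
      - ∑ j, (z.2.1 j • ((fderiv ℝ (fun x => γdn x j) z.1).comp
          (ContinuousLinearMap.fst ℝ (PPhase d) ((Fin d → ℝ) × (Fin d → ℝ))))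
        + γdn z.1 j • ((ContinuousLinearMap.proj j).comp P1))) z := by
    exact (HasFDerivAt.fun_sum (fun j _ => (hp2 j).fun_mul (hgu j))).sub
      (HasFDerivAt.fun_sum (fun j _ => (hp1 j).fun_mul (hgd j)))
  rw [hmain.fderiv]
  simp only [ContinuousLinearMap.sub_apply, ContinuousLinearMap.sum_apply,
    ContinuousLinearMap.add_apply, ContinuousLinearMap.smul_apply,
    ContinuousLinearMap.comp_apply, ContinuousLinearMap.coe_fst',
    ContinuousLinearMap.coe_snd', ContinuousLinearMap.proj_apply, hP1, hP2,
    dq, dp, map_zero, smul_eq_mul, mul_zero, zero_add, add_zero]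
  refine ⟨?_, ?_, ?_, ?_⟩
  · simp [Pi.single_apply, mul_ite, Finset.sum_ite_eq']
  · simp [Pi.single_apply, mul_ite, Finset.sum_ite_eq']
  · simp
  · simp
end
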